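/- Let g be a finite-dimensional Lie algebra over ℂ with an element Z ∈ g such that g is the internal direct sum g = g₋₂ ⊕ g₋₁ ⊕ g₀ ⊕ g₁ ⊕ g₂ of the eigenspaces gₖ = {X ∈ g | ⁅Z, X⁆ = (k : ℂ) • X} of ad Z. Set γ₃ := exp((2πi/3) • ad Z) and γ₄ := exp((2πi/4) • ad Z). Then the fixed-point sets of γ₃ and γ₄ coincide: {X ∈ g | γ₃ X = X} = {X ∈ g | γ₄ X = X}. (This is the abstract content of Lemma 8.1: (e₈^ℂ)^{κ₄} = (e₈^ℂ)^{κ₃}.) -/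

import Mathlib

/-! On the `k`-eigenspace of `ad Z`, `exp((2πi/n) • ad Z)` is multiplication by `ζₙ ^ k`, where
`ζₙ = exp(2πi/n)` is a primitive `n`-th root of unity. Since `|k| ≤ 2 < n` for `n = 3, 4`, we
have `ζₙ ^ k = 1` only for `k = 0`, so by the eigenspace decomposition both fixed-point sets
are the centralizer `g₀ = ker (ad Z)` of `Z`. -/

open NormedSpace Module End

section Exponential

variable {𝕂 E : Type*} [RCLike 𝕂] [NormedAddCommGroup E] [NormedSpace 𝕂 E]

theorem NormedSpace.exp_apply_of_apply_eq_smul [CompleteSpace E] {T : E →L[𝕂] E} {μ : 𝕂}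
    {X : E} (hX : T X = μ • X) : exp T X = exp μ • X := by
  have hpow : ∀ n : ℕ, (T ^ n) X = μ ^ n • X := by
    intro n
    induction n with
    | zero => simp
    | succ n ih => rw [pow_succ, mul_apply_eq_comp, hX, map_smul, ih, smul_smul,
        pow_succ, mul_comm]
  have hT : HasSum (fun n : ℕ => (n.factorial : 𝕂)⁻¹ • (μ ^ n • X)) (exp T X) := by
    simpa [hpow] using
      (exp_series_hasSum_exp' (𝕂 := 𝕂) T).mapL (ContinuousLinearMap.apply 𝕂 E X)
  have hμ : HasSum (fun n : ℕ => (n.factorial : 𝕂)⁻¹ • (μ ^ n • X)) (exp μ • X) := by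
    simpa [smul_smul] using (exp_series_hasSum_exp' (𝕂 := 𝕂) μ).smul_const X
  exact hT.unique hμ

variable [FiniteDimensional 𝕂 E]

theorem NormedSpace.exp_smul_toContinuousLinearMap_apply_of_mem_eigenspace
    {A : E →ₗ[𝕂] E} {μ : 𝕂} {X : E} (hX : X ∈ eigenspace A μ) (c : 𝕂) :
    exp (c • LinearMap.toContinuousLinearMap A) X = exp (c * μ) • X :=
  have := FiniteDimensional.complete 𝕂 E
  exp_apply_of_apply_eq_smul (by simp [mem_eigenspace_iff.mp hX, smul_smul])

theorem NormedSpace.setOf_exp_smul_apply_eq_self_eq_ker {ι : Type*} [DecidableEq ι]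
    {A : E →ₗ[𝕂] E} {μ : ι → 𝕂} (hA : DirectSum.IsInternal fun i => eigenspace A (μ i)) {c : 𝕂}
    (hc : ∀ i, exp (c * μ i) = 1 → μ i = 0) :
    {X : E | exp (c • LinearMap.toContinuousLinearMap A) X = X} = LinearMap.ker A := by
  ext X
  constructor
  · intro hX
    have hXmem : X ∈ ⨆ i, eigenspace A (μ i) := hA.submodule_iSup_eq_top ▸ Submodule.mem_top
    obtain ⟨x, hx, rfl⟩ := (Submodule.mem_iSup_iff_exists_finsupp _ X).mp hXmem
    have hsum : ∑ i ∈ x.support, (exp (c * μ i) - 1) • x i = 0 := by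
      simpa [Finsupp.sum, map_sum, sub_smul, Finset.sum_sub_distrib,
        exp_smul_toContinuousLinearMap_apply_of_mem_eigenspace (hx _), sub_eq_zero] using hX
    have hzero := (iSupIndep_iff_finsetSum_eq_zero_imp_eq_zero _).mp hA.submodule_iSupIndep
      _ _ (fun i _ => Submodule.smul_mem _ _ (hx i)) hsum
    have hAx : ∀ i ∈ x.support, A (x i) = 0 := by
      intro i hi
      rw [mem_eigenspace_iff.mp (hx i)]
      rcases smul_eq_zero.mp (hzero i hi) with h | h
      · rw [hc i (sub_eq_zero.mp h), zero_smul]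
      · rw [h, smul_zero]
    simp [Finsupp.sum, map_sum, Finset.sum_eq_zero hAx]
  · intro hX
    simpa using exp_smul_toContinuousLinearMap_apply_of_mem_eigenspace
      (A := A) (μ := 0) (by simpa using hX) c

end Exponential

theorem Complex.exp_two_pi_I_div_mul_intCast_eq_one_iff {n : ℕ} {m : ℤ} (hm : |m| < n) :
    exp (2 * Real.pi * I / n * m) = 1 ↔ m = 0 := by
  have hn : n ≠ 0 := by rintro rfl; exact (abs_nonneg m).not_gt (by simpa using hm)
  rw [mul_comm, exp_int_mul, (isPrimitiveRoot_exp n hn).zpow_eq_one_iff_dvd]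
  exact ⟨fun h => Int.eq_zero_of_abs_lt_dvd h hm, by rintro rfl; simp⟩

theorem Complex.sub_two_eq_zero_of_exp_two_pi_I_div_mul_eq_one {n : ℕ} (hn : 3 ≤ n)
    (k : Fin 5) (h : NormedSpace.exp (2 * Real.pi * I / n * (((k : ℕ) : ℂ) - 2)) = 1) :
    ((k : ℕ) : ℂ) - 2 = 0 := by
  have hk : ((k : ℕ) : ℂ) - 2 = (((k : ℤ) - 2 : ℤ) : ℂ) := by push_cast; rfl
  have hlt : |(k : ℤ) - 2| < n := abs_lt.mpr ⟨by omega, by omega⟩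
  rw [← exp_eq_exp_ℂ, hk] at h
  rw [hk]
  exact_mod_cast (exp_two_pi_I_div_mul_intCast_eq_one_iff hlt).mp h

theorem fixedPoints_exp_two_pi_I_div_three_eq_fixedPoints_exp_two_pi_I_div_four_general
    (g : Type*) [NormedAddCommGroup g] [NormedSpace ℂ g] [FiniteDimensional ℂ g]
    (bracket : g →ₗ[ℂ] g →ₗ[ℂ] g)
    (Z : g)
    (hdecomp : DirectSum.IsInternal fun k : Fin 5 =>
      Module.End.eigenspace (bracket Z) (((k : ℕ) : ℂ) - 2)) :
    {X : g | NormedSpace.exp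
        ((2 * (Real.pi : ℂ) * Complex.I / 3) •
          LinearMap.toContinuousLinearMap (bracket Z)) X = X}
      = {X : g | NormedSpace.exp
          ((2 * (Real.pi : ℂ) * Complex.I / 4) •
            LinearMap.toContinuousLinearMap (bracket Z)) X = X} := by
  have h3 := fun k ↦ Complex.sub_two_eq_zero_of_exp_two_pi_I_div_mul_eq_one (n := 3) le_rfl k
  have h4 := fun k ↦ Complex.sub_two_eq_zero_of_exp_two_pi_I_div_mul_eq_one (n := 4) (by norm_num) k
  simp only [Nat.cast_ofNat] at h3 h4
  rw [setOf_exp_smul_apply_eq_self_eq_ker hdecomp h3,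
    setOf_exp_smul_apply_eq_self_eq_ker hdecomp h4]

/-- Let `g` be a finite-dimensional Lie algebra over `ℂ` (presented as a
finite-dimensional complex vector space together with a bilinear bracket which is alternating
and satisfies the Jacobi identity in Leibniz form), and let `Z ∈ g` be such that `g` is the
internal direct sum of the eigenspaces `gₖ = {X | ⁅Z, X⁆ = (k : ℂ) • X}`, `k = -2, …, 2`, of
`ad Z = bracket Z`.  Set `γ₃ := exp((2πi/3) • ad Z)` and `γ₄ := exp((2πi/4) • ad Z)`.  Then
the fixed-point sets of `γ₃` and `γ₄` coincide.  (This is the abstract content of Lemma 8.1: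
`(e₈^ℂ)^{κ₄} = (e₈^ℂ)^{κ₃}`.) -/
theorem fixedPoints_exp_two_pi_I_div_three_eq_fixedPoints_exp_two_pi_I_div_four
    (g : Type*) [NormedAddCommGroup g] [NormedSpace ℂ g] [FiniteDimensional ℂ g]
    (bracket : g →ₗ[ℂ] g →ₗ[ℂ] g)
    (halt : ∀ X : g, bracket X X = 0)
    (hjacobi : ∀ X Y W : g,
      bracket X (bracket Y W) = bracket (bracket X Y) W + bracket Y (bracket X W))
    (Z : g)
    (hdecomp : DirectSum.IsInternal fun k : Fin 5 =>
      Module.End.eigenspace (bracket Z) (((k : ℕ) : ℂ) - 2)) :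
    {X : g | NormedSpace.exp
        ((2 * (Real.pi : ℂ) * Complex.I / 3) •
          LinearMap.toContinuousLinearMap (bracket Z)) X = X}
      = {X : g | NormedSpace.exp
          ((2 * (Real.pi : ℂ) * Complex.I / 4) •
            LinearMap.toContinuousLinearMap (bracket Z)) X = X} :=
  fixedPoints_exp_two_pi_I_div_three_eq_fixedPoints_exp_two_pi_I_div_four_general g bracket Z
    hdecomp
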